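/- arXiv:2506.22657 — 3 statements merged into one kernel-verified Lean document; each statement's English description precedes it below -/
import Mathlib

section
/- For all p₁, p₂, p₃ each equal to 0 or belonging to [1, ∞), and every h₀ with 0 < h₀ < 1/(s·c·c₃), there exists a constant c₄ > 0, depending only on p₁, p₂, p₃, s, c₃, c, m and h₀, such that: for every probability space, every drift function a and diffusion functions b¹, …, b^m, every admissible coefficient set, every h ∈ (0, h₀), every t ∈ ℝ, every random data (G₁, …, G_m, Z) with E‖Z‖^{p₃} < ∞ and associated random stage values, and all indices j₁, j₂, j₃ ∈ {1, …, m}: E[ |G_{j₁}|^{p₁} · |ξ̂_{j₂,j₃}|^{p₂} · max_{1≤k≤m, 1≤i≤s} ‖H⁽ᵏ⁾_i − Z‖^{p₃} ] ≤ c₄ · (1 + E‖Z‖^{p₃}) · h^{p₁/2 + p₂ + p₃} (a factor with exponent 0 is taken to be 1). (Lemma 6.4 in the commutative-noise form with ξ̂ = I^C or J^C, as asserted in Sections 6.5 and 6.6.) -/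
/-!
Write `W = 1 + ‖Z‖` and let `M ≥ 1` be the larger of `1` and the normalised increments
`|G_k| / √h`, so that `|G_k| ≤ √h M` and `|ξ̂_{r,k}| ≤ h M²` in the Itô and in the Stratonovich
case alike. Summing the implicit drift stage equations gives
`∑_j (1 + ‖H⁽⁰⁾_j‖) ≤ s W / (1 - h₀ s c c₃)`, so the drift parts of all stages are `O(h W)`; the
explicit diffusion stages then obey a discrete Gronwall inequality with rate `m c c₃ h M²`, whence
`‖H⁽ᵏ⁾_i - Z‖ ≤ C h W M^(2s+2)`. The integrand is thus at most
`C^p₃ h^(p₁/2 + p₂ + p₃) W^p₃ M^Q`. Since `Z` is independent of the `G_k`, its expectation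
factorises, and `M^Q ≤ 1 + ∑_k |G_k / √h|^Q` has an expectation given by a standard Gaussian
moment, independent of `h`.
-/

open MeasureTheory ProbabilityTheory Finset

theorem le_mul_one_add_pow_of_le_add_sum {n : ℕ} {u : Fin n → ℝ} {a β : ℝ} (hβ : 0 ≤ β)
    (hu : ∀ i, u i ≤ a + β * ∑ j ∈ Iio i, u j) (i : Fin n) :
    u i ≤ a * (1 + β) ^ (i : ℕ) := by
  induction i using WellFoundedLT.induction with
  | ind i ih =>
    have hgeom := geom_sum_mul (1 + β) i
    rw [add_sub_cancel_left] at hgeom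
    calc u i ≤ a + β * ∑ j ∈ Iio i, a * (1 + β) ^ (j : ℕ) := by
          refine (hu i).trans ?_
          gcongr with j hj
          exact ih j (mem_Iio.mp hj)
      _ = a * (1 + β) ^ (i : ℕ) := by
          have hrange : ∑ j ∈ Iio i, a * (1 + β) ^ (j : ℕ) = a * ∑ k ∈ range i, (1 + β) ^ k := by
            rw [← Nat.Iio_eq_range, ← Fin.map_valEmbedding_Iio, sum_map, mul_sum]
            rfl
          rw [hrange]
          linear_combination a * hgeom

section StageBounds

variable {E : Type*} [SeminormedAddCommGroup E] [NormedSpace ℝ E]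

theorem norm_sum_smul_le_of_linear_growth {ι : Type*} (t : Finset ι) {w : ι → ℝ} {v y : ι → E}
    {K c : ℝ} (hw : ∀ j ∈ t, |w j| ≤ K) (hv : ∀ j ∈ t, ‖v j‖ ≤ c * (1 + ‖y j‖)) :
    ‖∑ j ∈ t, w j • v j‖ ≤ K * (c * ∑ j ∈ t, (1 + ‖y j‖)) := by
  rw [mul_sum, mul_sum]
  refine (norm_sum_le _ _).trans (sum_le_sum fun j hj => ?_)
  rw [norm_smul, Real.norm_eq_abs]
  exact mul_le_mul (hw j hj) (hv j hj) (norm_nonneg _) ((abs_nonneg _).trans (hw j hj))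

theorem one_sub_mul_sum_one_add_norm_le {s : ℕ} {c c₃ h : ℝ} {A : Fin s → Fin s → ℝ} {z : E}
    {Y f : Fin s → E} (hh : 0 ≤ h) (hA : ∀ i j, |A i j| ≤ c₃)
    (hf : ∀ j, ‖f j‖ ≤ c * (1 + ‖Y j‖)) (hY : ∀ i, Y i = z + h • ∑ j, A i j • f j) :
    (1 - h * (s * c * c₃)) * ∑ j, (1 + ‖Y j‖) ≤ s * (1 + ‖z‖) := by
  have hstage : ∀ i, 1 + ‖Y i‖ ≤ 1 + ‖z‖ + h * (c₃ * (c * ∑ j, (1 + ‖Y j‖))) := fun i => by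
    rw [hY i, add_assoc]
    gcongr
    refine (norm_add_le _ _).trans ?_
    rw [norm_smul, Real.norm_of_nonneg hh]
    gcongr
    exact norm_sum_smul_le_of_linear_growth _ (fun j _ => hA i j) (fun j _ => hf j)
  have hsum := sum_le_sum fun i (_ : i ∈ univ) => hstage i
  rw [sum_const, card_univ, Fintype.card_fin, nsmul_eq_mul] at hsum
  linarith

theorem norm_diffusion_stage_sub_le {ι : Type*} [Fintype ι] {s : ℕ} {c c₃ δ X : ℝ} {z : E}
    {d : Fin s → E} {B : Fin s → Fin s → ℝ} {x : ι → ι → ℝ} {v Y : ι → Fin s → E}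
    (hc : 0 ≤ c) (hc₃ : 0 ≤ c₃) (hX : 0 ≤ X) (hδ : 0 ≤ δ)
    (hd : ∀ i, ‖d i‖ ≤ δ) (hB : ∀ i j, |B i j| ≤ c₃) (hx : ∀ r k, |x r k| ≤ X)
    (hv : ∀ r j, ‖v r j‖ ≤ c * (1 + ‖Y r j‖))
    (hY : ∀ k i, Y k i = z + d i + ∑ r, ∑ j ∈ univ.filter (· < i), (B i j * x r k) • v r j)
    (k : ι) (i : Fin s) :
    ‖Y k i - z‖ ≤ (δ + Fintype.card ι * c * c₃ * X * s * (1 + ‖z‖)) *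
      (1 + Fintype.card ι * c * c₃ * X) ^ s := by
  set β := Fintype.card ι * c * c₃ * X
  have hβ : 0 ≤ β := by positivity
  set u : Fin s → ℝ := fun i => ⨆ r, ‖Y r i - z‖
  have hu0 : ∀ i, 0 ≤ u i := fun i => Real.iSup_nonneg fun r => norm_nonneg _
  have hYu : ∀ r i, ‖Y r i - z‖ ≤ u i := fun r i =>
    le_ciSup (f := fun r => ‖Y r i - z‖) (Finite.bddAbove_range _) r
  have hstep : ∀ k i, ‖Y k i - z‖ ≤ δ + β * s * (1 + ‖z‖) + β * ∑ j ∈ Iio i, u j := by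
    intro k i
    have hrow : ∀ r, ∑ j ∈ Iio i, (1 + ‖Y r j‖) ≤ s * (1 + ‖z‖) + ∑ j ∈ Iio i, u j := fun r =>
      calc ∑ j ∈ Iio i, (1 + ‖Y r j‖) ≤ ∑ j ∈ Iio i, (1 + ‖z‖ + u j) :=
            sum_le_sum fun j _ => by linarith [norm_le_norm_add_norm_sub' (Y r j) z, hYu r j]
        _ ≤ s * (1 + ‖z‖) + ∑ j ∈ Iio i, u j := by
            rw [sum_add_distrib, sum_const, Fin.card_Iio, nsmul_eq_mul]
            gcongr
            exact_mod_cast i.isLt.le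
    rw [hY k i, add_assoc, add_sub_cancel_left, filter_gt_eq_Iio]
    calc ‖d i + ∑ r, ∑ j ∈ Iio i, (B i j * x r k) • v r j‖
        ≤ δ + ∑ r : ι, c₃ * X * (c * (s * (1 + ‖z‖) + ∑ j ∈ Iio i, u j)) := by
          refine (norm_add_le _ _).trans (add_le_add (hd i) ?_)
          refine (norm_sum_le _ _).trans (sum_le_sum fun r _ => ?_)
          refine (norm_sum_smul_le_of_linear_growth _ (K := c₃ * X)
            (fun j _ => ?_) (fun j _ => hv r j)).trans ?_
          · rw [abs_mul]
            exact mul_le_mul (hB i j) (hx r k) (abs_nonneg _) hc₃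
          · gcongr
            exact hrow r
      _ = δ + β * s * (1 + ‖z‖) + β * ∑ j ∈ Iio i, u j := by
          rw [sum_const, card_univ, nsmul_eq_mul]
          ring
  have hgron := le_mul_one_add_pow_of_le_add_sum hβ
    (fun i => Real.iSup_le (fun r => hstep r i)
      (add_nonneg (by positivity) (mul_nonneg hβ (sum_nonneg fun j _ => hu0 j)))) i
  calc ‖Y k i - z‖ ≤ u i := hYu k i
    _ ≤ _ := hgron
    _ ≤ _ := by
      gcongr
      · linarith
      · exact i.isLt.le

end StageBounds

/-- The drift stages contribute `s c c₃ / (1 - h₀ s c c₃)` per unit of `h (1 + ‖z‖)`, the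
explicit diffusion terms `n c c₃ s`, and each diffusion stage enlarges the bound by a factor of at
most `(1 + n c c₃ h₀) M²`. -/
noncomputable def srkStageConst (s n : ℕ) (c c₃ h₀ : ℝ) : ℝ :=
  (s * c * c₃ / (1 - h₀ * (s * c * c₃)) + n * c * c₃ * s) * (1 + n * c * c₃ * h₀) ^ s

theorem srkStageConst_nonneg {s n : ℕ} {c c₃ h₀ : ℝ} (hc : 0 ≤ c) (hc₃ : 0 ≤ c₃) (hh₀ : 0 ≤ h₀)
    (hq : h₀ * (s * c * c₃) < 1) : 0 ≤ srkStageConst s n c c₃ h₀ := by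
  have : 0 ≤ s * c * c₃ / (1 - h₀ * (s * c * c₃)) := div_nonneg (by positivity) (by linarith)
  unfold srkStageConst
  positivity

theorem srkStageConst_pos {s n : ℕ} {c c₃ h₀ : ℝ} (hc : 0 ≤ c) (hc₃ : 0 ≤ c₃) (hh₀ : 0 ≤ h₀)
    (hscc : 0 < s * c * c₃) (hq : h₀ * (s * c * c₃) < 1) : 0 < srkStageConst s n c c₃ h₀ := by
  have : 0 < s * c * c₃ / (1 - h₀ * (s * c * c₃)) := div_pos hscc (by linarith)
  unfold srkStageConst
  positivity

section SRK

variable {E : Type*} [SeminormedAddCommGroup E] [NormedSpace ℝ E] {s : ℕ} {c c₃ h h₀ : ℝ}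

theorem norm_smul_sum_le_of_drift_stage {A A' : Fin s → Fin s → ℝ} {z : E} {Y f : Fin s → E}
    (hc : 0 ≤ c) (hc₃ : 0 ≤ c₃) (hh : 0 ≤ h) (hhh₀ : h ≤ h₀) (hh₀ : h₀ * (s * c * c₃) < 1)
    (hA : ∀ i j, |A i j| ≤ c₃) (hA' : ∀ i j, |A' i j| ≤ c₃)
    (hf : ∀ j, ‖f j‖ ≤ c * (1 + ‖Y j‖)) (hY : ∀ i, Y i = z + h • ∑ j, A i j • f j) (i : Fin s) :
    ‖h • ∑ j, A' i j • f j‖ ≤ h * (s * c * c₃ / (1 - h₀ * (s * c * c₃))) * (1 + ‖z‖) := by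
  have hpos : 0 < 1 - h₀ * (s * c * c₃) := by linarith
  have hT : ∑ j, (1 + ‖Y j‖) ≤ s * (1 + ‖z‖) / (1 - h₀ * (s * c * c₃)) := by
    rw [le_div_iff₀ hpos, mul_comm]
    refine le_trans ?_ (one_sub_mul_sum_one_add_norm_le hh hA hf hY)
    gcongr
  rw [norm_smul, Real.norm_of_nonneg hh, mul_assoc]
  gcongr
  calc ‖∑ j, A' i j • f j‖ ≤ c₃ * (c * ∑ j, (1 + ‖Y j‖)) :=
        norm_sum_smul_le_of_linear_growth _ (fun j _ => hA' i j) (fun j _ => hf j)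
    _ ≤ c₃ * (c * (s * (1 + ‖z‖) / (1 - h₀ * (s * c * c₃)))) := by gcongr
    _ = _ := by ring

theorem norm_srk_stage_sub_le {ι : Type*} [Fintype ι] {M : ℝ} {A0 A1 B : Fin s → Fin s → ℝ}
    {ξ : ι → ι → ℝ} {z : E} {H0 f : Fin s → E} {H g : ι → Fin s → E}
    (hc : 0 ≤ c) (hc₃ : 0 ≤ c₃) (hh : 0 ≤ h) (hhh₀ : h ≤ h₀) (hh₀ : h₀ * (s * c * c₃) < 1)
    (hM : 1 ≤ M) (hA0 : ∀ i j, |A0 i j| ≤ c₃) (hA1 : ∀ i j, |A1 i j| ≤ c₃)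
    (hB : ∀ i j, |B i j| ≤ c₃) (hξ : ∀ r k, |ξ r k| ≤ h * M ^ 2)
    (hf : ∀ j, ‖f j‖ ≤ c * (1 + ‖H0 j‖)) (hg : ∀ r j, ‖g r j‖ ≤ c * (1 + ‖H r j‖))
    (hH0 : ∀ i, H0 i = z + h • ∑ j, A0 i j • f j)
    (hH : ∀ k i, H k i = z + h • ∑ j, A1 i j • f j
      + ∑ r, ∑ j ∈ univ.filter (· < i), (B i j * ξ r k) • g r j) (k : ι) (i : Fin s) :
    ‖H k i - z‖ ≤ srkStageConst s (Fintype.card ι) c c₃ h₀ * h * (1 + ‖z‖) * M ^ (2 * s + 2) := by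
  set K := s * c * c₃ / (1 - h₀ * (s * c * c₃))
  set β₀ := Fintype.card ι * c * c₃
  have hK : 0 ≤ K := div_nonneg (by positivity) (by linarith)
  have hM2 : 1 ≤ M ^ 2 := one_le_pow₀ hM
  have hstage := norm_diffusion_stage_sub_le hc hc₃ (by positivity) (by positivity)
    (norm_smul_sum_le_of_drift_stage hc hc₃ hh hhh₀ hh₀ hA0 hA1 hf hH0) hB hξ hg hH k i
  refine hstage.trans ?_
  have hlin : h * K * (1 + ‖z‖) + β₀ * (h * M ^ 2) * s * (1 + ‖z‖)
      ≤ (K + β₀ * s) * h * (1 + ‖z‖) * M ^ 2 := by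
    have : h * K * (1 + ‖z‖) ≤ h * K * (1 + ‖z‖) * M ^ 2 :=
      le_mul_of_one_le_right (by positivity) hM2
    linarith
  have hgrowth : 1 + β₀ * (h * M ^ 2) ≤ (1 + β₀ * h₀) * M ^ 2 := by
    have : β₀ * (h * M ^ 2) ≤ β₀ * h₀ * M ^ 2 := by rw [← mul_assoc]; gcongr
    linarith
  calc (h * K * (1 + ‖z‖) + β₀ * (h * M ^ 2) * s * (1 + ‖z‖)) * (1 + β₀ * (h * M ^ 2)) ^ s
      ≤ ((K + β₀ * s) * h * (1 + ‖z‖) * M ^ 2) * ((1 + β₀ * h₀) * M ^ 2) ^ s := by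
        gcongr
    _ = _ := by rw [srkStageConst, mul_pow, ← pow_mul]; ring

end SRK

theorem abs_comm_noise_multiplier_le {ι : Type*} [DecidableEq ι] {g : ι → ℝ} {ξ : ι → ι → ℝ}
    {h M : ℝ} (hh : 0 ≤ h) (hg : ∀ k, |g k| ≤ √h * M) (hM : 1 ≤ M)
    (hξ : (∀ r k, ξ r k = g r * g k / 2) ∨
      (∀ r k, ξ r k = g r * g k / 2 - if r = k then h / 2 else 0)) (r k : ι) :
    |ξ r k| ≤ h * M ^ 2 := by
  have hL : (√h * M) ^ 2 = h * M ^ 2 := by rw [mul_pow, Real.sq_sqrt hh]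
  have hprod : |g r * g k / 2| ≤ h * M ^ 2 / 2 := by
    rw [abs_div, abs_mul, abs_two, ← hL, sq]
    have := mul_le_mul (hg r) (hg k) (abs_nonneg _) ((abs_nonneg _).trans (hg r))
    linarith
  have hhM : h ≤ h * M ^ 2 := le_mul_of_one_le_right hh (one_le_pow₀ hM)
  rcases hξ with hξ | hξ
  · rw [hξ]
    linarith
  · rw [hξ]
    refine (abs_sub _ _).trans ?_
    have hcorr : |if r = k then h / 2 else 0| ≤ h * M ^ 2 / 2 := by
      split_ifs
      · rw [abs_of_nonneg (by linarith)]
        linarith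
      · simp only [abs_zero]
        positivity
    linarith

theorem rpow_mul_rpow_mul_le {u v w h M C W p₁ p₂ p₃ : ℝ} (n : ℕ) (hu0 : 0 ≤ u)
    (hv0 : 0 ≤ v) (hw0 : 0 ≤ w) (hh : 0 < h) (hM : 0 < M) (hC : 0 ≤ C) (hW : 0 ≤ W)
    (hp₁ : 0 ≤ p₁) (hp₂ : 0 ≤ p₂) (hu : u ≤ √h * M) (hv : v ≤ h * M ^ 2)
    (hw : w ≤ (C * h * W * M ^ n) ^ p₃) :
    u ^ p₁ * v ^ p₂ * w ≤
      C ^ p₃ * h ^ (p₁ / 2 + p₂ + p₃) * (W ^ p₃ * M ^ (p₁ + 2 * p₂ + n * p₃)) := by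
  calc u ^ p₁ * v ^ p₂ * w ≤ (√h * M) ^ p₁ * (h * M ^ 2) ^ p₂ * (C * h * W * M ^ n) ^ p₃ := by
        gcongr
    _ = _ := by
      rw [Real.mul_rpow (by positivity) hM.le, Real.sqrt_eq_rpow, ← Real.rpow_mul hh.le,
        Real.mul_rpow hh.le (by positivity), ← Real.rpow_natCast M 2, ← Real.rpow_mul hM.le,
        Real.mul_rpow (by positivity) (by positivity), Real.mul_rpow (by positivity) hW,
        Real.mul_rpow hC hh.le, ← Real.rpow_natCast M n, ← Real.rpow_mul hM.le,
        Real.rpow_add hh, Real.rpow_add hh, Real.rpow_add hM, Real.rpow_add hM]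
      ring_nf

theorem max_one_iSup_rpow_le {ι : Type*} [Fintype ι] (y : ι → ℝ) (q : ℝ) :
    max 1 (⨆ k, |y k|) ^ q ≤ 1 + ∑ k, |y k| ^ q := by
  have hsum : 0 ≤ ∑ k, |y k| ^ q := sum_nonneg fun k _ => by positivity
  rcases le_total (⨆ k, |y k|) 1 with hle | hle
  · rw [max_eq_left hle, Real.one_rpow]
    linarith
  · rcases isEmpty_or_nonempty ι with hι | hι
    · rw [Real.iSup_of_isEmpty] at hle
      norm_num at hle
    obtain ⟨k, hk⟩ := exists_eq_ciSup_of_finite (f := fun k => |y k|)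
    rw [max_eq_right hle, ← hk]
    exact (single_le_sum (f := fun k => |y k| ^ q) (fun k _ => by positivity) (mem_univ k)).trans
      (le_add_of_nonneg_left zero_le_one)

theorem one_add_rpow_le {x p : ℝ} (hx : 0 ≤ x) (hp : 0 ≤ p) :
    (1 + x) ^ p ≤ 2 ^ p * (1 + x ^ p) := by
  calc (1 + x) ^ p ≤ (2 * max 1 x) ^ p := by
        gcongr
        linarith [le_max_left 1 x, le_max_right 1 x]
    _ = 2 ^ p * max 1 x ^ p := Real.mul_rpow zero_le_two (by positivity)
    _ ≤ 2 ^ p * (1 + x ^ p) := by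
        gcongr
        rcases max_choice 1 x with h | h <;> rw [h]
        · rw [Real.one_rpow]; linarith [Real.rpow_nonneg hx p]
        · linarith

theorem srk_integrand_le {E : Type*} [SeminormedAddCommGroup E] [NormedSpace ℝ E]
    {ι : Type*} [Fintype ι] [DecidableEq ι] {s : ℕ} {c c₃ h h₀ p₁ p₂ p₃ : ℝ}
    {g : ι → ℝ} {ξ : ι → ι → ℝ} {A0 A1 B : Fin s → Fin s → ℝ} {z : E} {H0 f : Fin s → E}
    {H b : ι → Fin s → E} (hc : 0 ≤ c) (hc₃ : 0 ≤ c₃) (hh : 0 < h) (hhh₀ : h ≤ h₀)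
    (hh₀ : h₀ * (s * c * c₃) < 1) (hp₁ : 0 ≤ p₁) (hp₂ : 0 ≤ p₂) (hp₃ : 0 ≤ p₃)
    (hA0 : ∀ i j, |A0 i j| ≤ c₃) (hA1 : ∀ i j, |A1 i j| ≤ c₃) (hB : ∀ i j, |B i j| ≤ c₃)
    (hξ : (∀ r k, ξ r k = g r * g k / 2) ∨
      (∀ r k, ξ r k = g r * g k / 2 - if r = k then h / 2 else 0))
    (hf : ∀ j, ‖f j‖ ≤ c * (1 + ‖H0 j‖)) (hb : ∀ r j, ‖b r j‖ ≤ c * (1 + ‖H r j‖))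
    (hH0 : ∀ i, H0 i = z + h • ∑ j, A0 i j • f j)
    (hH : ∀ k i, H k i = z + h • ∑ j, A1 i j • f j
      + ∑ r, ∑ j ∈ univ.filter (· < i), (B i j * ξ r k) • b r j) (j₁ j₂ j₃ : ι) :
    |g j₁| ^ p₁ * |ξ j₂ j₃| ^ p₂ * (⨆ ki : ι × Fin s, ‖H ki.1 ki.2 - z‖ ^ p₃) ≤
      srkStageConst s (Fintype.card ι) c c₃ h₀ ^ p₃ * h ^ (p₁ / 2 + p₂ + p₃) *
        ((1 + ‖z‖) ^ p₃ *
          max 1 (⨆ k, |g k / √h|) ^ (p₁ + 2 * p₂ + ((2 * s + 2 : ℕ) : ℝ) * p₃)) := by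
  set M := max 1 (⨆ k, |g k / √h|)
  have hM : 1 ≤ M := le_max_left _ _
  have hsqrt : 0 < √h := Real.sqrt_pos.mpr hh
  have hgM : ∀ k, |g k| ≤ √h * M := fun k => by
    have hk : |g k / √h| ≤ M :=
      (le_ciSup (f := fun k => |g k / √h|) (Finite.bddAbove_range _) k).trans (le_max_right _ _)
    rwa [abs_div, abs_of_pos hsqrt, div_le_iff₀' hsqrt] at hk
  have hC := srkStageConst_nonneg (n := Fintype.card ι) hc hc₃ (hh.le.trans hhh₀) hh₀
  have hstage := norm_srk_stage_sub_le hc hc₃ hh.le hhh₀ hh₀ hM hA0 hA1 hB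
    (abs_comm_noise_multiplier_le hh.le hgM hM hξ) hf hb hH0 hH
  exact rpow_mul_rpow_mul_le _ (abs_nonneg _) (abs_nonneg _)
    (Real.iSup_nonneg fun ki => by positivity) hh (by positivity) hC
    (by positivity) hp₁ hp₂ (hgM j₁) (abs_comm_noise_multiplier_le hh.le hgM hM hξ j₂ j₃)
    (Real.iSup_le (fun ki => Real.rpow_le_rpow (norm_nonneg _) (hstage ki.1 ki.2) hp₃)
      (by positivity))

section Moments

variable {Ω : Type*} [MeasurableSpace Ω] {μ : Measure Ω}

theorem hasLaw_div_sqrt_of_map_eq_gaussianReal {X : Ω → ℝ} {v : ℝ} (hv : 0 < v)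
    (hX : Measurable X) (hmap : μ.map X = gaussianReal 0 v.toNNReal) :
    HasLaw (fun ω => X ω / √v) (gaussianReal 0 1) μ := by
  convert gaussianReal_div_const ⟨hX.aemeasurable, hmap⟩ √v using 2
  · simp
  · ext
    simp [Real.sq_sqrt hv.le, Real.coe_toNNReal _ hv.le, hv.ne']

theorem integrable_abs_rpow_gaussianReal {m : ℝ} {v : NNReal} {q : ℝ} (hq : 0 ≤ q) :
    Integrable (fun x => |x| ^ q) (gaussianReal m v) := by
  simpa [Real.coe_toNNReal q hq] using
    (memLp_id_gaussianReal (μ := m) (v := v) q.toNNReal).integrable_norm_rpow'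

theorem integrable_abs_rpow_of_hasLaw {X : Ω → ℝ} {ν : Measure ℝ} {q : ℝ} (hX : HasLaw X ν μ)
    (hq : Integrable (fun x => |x| ^ q) ν) : Integrable (fun ω => |X ω| ^ q) μ := by
  rw [← hX.map_eq] at hq
  exact (integrable_map_measure hq.aestronglyMeasurable hX.aemeasurable).mp hq

variable [IsProbabilityMeasure μ]

theorem integrable_one_add_rpow {Y : Ω → ℝ} {p : ℝ} (hp : 0 ≤ p) (hY0 : ∀ ω, 0 ≤ Y ω)
    (hY : AEMeasurable Y μ) (hYp : Integrable (fun ω => Y ω ^ p) μ) :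
    Integrable (fun ω => (1 + Y ω) ^ p) μ := by
  refine (((integrable_const 1).add hYp).const_mul (2 ^ p)).mono'
    ((aemeasurable_const.add hY).pow_const p).aestronglyMeasurable (ae_of_all _ fun ω => ?_)
  rw [Real.norm_of_nonneg (by have := hY0 ω; positivity)]
  exact one_add_rpow_le (hY0 ω) hp

theorem integral_one_add_rpow_le {Y : Ω → ℝ} {p : ℝ} (hp : 0 ≤ p) (hY0 : ∀ ω, 0 ≤ Y ω)
    (hYp : Integrable (fun ω => Y ω ^ p) μ) :
    ∫ ω, (1 + Y ω) ^ p ∂μ ≤ 2 ^ p * (1 + ∫ ω, Y ω ^ p ∂μ) := by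
  have hbound : Integrable (fun ω => 2 ^ p * (1 + Y ω ^ p)) μ :=
    ((integrable_const 1).add hYp).const_mul _
  calc ∫ ω, (1 + Y ω) ^ p ∂μ ≤ ∫ ω, 2 ^ p * (1 + Y ω ^ p) ∂μ :=
        integral_mono_of_nonneg (ae_of_all _ fun ω => by have := hY0 ω; positivity) hbound
          (ae_of_all _ fun ω => one_add_rpow_le (hY0 ω) hp)
    _ = 2 ^ p * (1 + ∫ ω, Y ω ^ p ∂μ) := by
        rw [integral_const_mul, integral_add (integrable_const 1) hYp, integral_const,
          probReal_univ, one_smul]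

section MaxOfLaws

variable {ι : Type*} [Fintype ι] {g : ι → Ω → ℝ} {ν : Measure ℝ} {q : ℝ}

theorem integrable_one_add_sum_abs_rpow (hg : ∀ k, HasLaw (g k) ν μ)
    (hq : Integrable (fun x => |x| ^ q) ν) :
    Integrable (fun ω => 1 + ∑ k, |g k ω| ^ q) μ :=
  (integrable_const 1).add <| integrable_finsetSum _ fun k _ =>
    integrable_abs_rpow_of_hasLaw (hg k) hq

theorem integrable_max_one_iSup_rpow (hg : ∀ k, HasLaw (g k) ν μ)
    (hq : Integrable (fun x => |x| ^ q) ν) :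
    Integrable (fun ω => max 1 (⨆ k, |g k ω|) ^ q) μ := by
  refine (integrable_one_add_sum_abs_rpow hg hq).mono' ?_ (ae_of_all _ fun ω => ?_)
  · exact ((aemeasurable_const.max (AEMeasurable.iSup fun k => (hg k).aemeasurable.abs)).pow_const
      q).aestronglyMeasurable
  · rw [Real.norm_of_nonneg (Real.rpow_nonneg (zero_le_one.trans (le_max_left _ _)) _)]
    exact max_one_iSup_rpow_le _ q

theorem integral_max_one_iSup_rpow_le (hg : ∀ k, HasLaw (g k) ν μ)
    (hq : Integrable (fun x => |x| ^ q) ν) :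
    ∫ ω, max 1 (⨆ k, |g k ω|) ^ q ∂μ ≤ 1 + Fintype.card ι * ∫ x, |x| ^ q ∂ν := by
  have hsum := integrable_one_add_sum_abs_rpow hg hq
  refine (integral_mono (integrable_max_one_iSup_rpow hg hq) hsum
    fun ω => max_one_iSup_rpow_le _ q).trans_eq ?_
  rw [integral_add (integrable_const 1) (integrable_finsetSum _ fun k _ =>
      integrable_abs_rpow_of_hasLaw (hg k) hq),
    integral_finsetSum _ fun k _ => integrable_abs_rpow_of_hasLaw (hg k) hq]
  have hk : ∀ k, ∫ ω, |g k ω| ^ q ∂μ = ∫ x, |x| ^ q ∂ν := fun k =>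
    (hg k).integral_comp (f := fun x => |x| ^ q) hq.aestronglyMeasurable
  simp [hk]

end MaxOfLaws

end Moments

theorem integral_le_mul_of_le_mul_indepFun {Ω : Type*} [MeasurableSpace Ω] {μ : Measure Ω}
    {Y U V : Ω → ℝ} {C : ℝ} (hY0 : 0 ≤ᵐ[μ] Y) (hYUV : ∀ᵐ ω ∂μ, Y ω ≤ C * (U ω * V ω))
    (hUV : IndepFun U V μ) (hU : Integrable U μ) (hV : Integrable V μ) :
    ∫ ω, Y ω ∂μ ≤ C * ((∫ ω, U ω ∂μ) * ∫ ω, V ω ∂μ) := by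
  rw [← hUV.integral_fun_mul_eq_mul_integral hU.aestronglyMeasurable hV.aestronglyMeasurable,
    ← integral_const_mul]
  exact integral_mono_of_nonneg hY0 ((hUV.integrable_mul hU hV).const_mul C) hYUV

theorem integral_le_of_le_mul_one_add_norm_rpow_mul_max_rpow {Ω : Type*} [MeasurableSpace Ω]
    {μ : Measure Ω} [IsProbabilityMeasure μ] {E : Type*} [NormedAddCommGroup E] [MeasurableSpace E]
    [OpensMeasurableSpace E] {ι : Type*} [Fintype ι] {Y : Ω → ℝ} {Z : Ω → E} {g : ι → Ω → ℝ}
    {ν : Measure ℝ} {K p q : ℝ} (hp : 0 ≤ p) (hZ : AEMeasurable Z μ)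
    (hZp : Integrable (fun ω => ‖Z ω‖ ^ p) μ) (hg : ∀ k, HasLaw (g k) ν μ)
    (hq : Integrable (fun x => |x| ^ q) ν) (hZg : IndepFun Z (fun ω k => g k ω) μ) (hK : 0 ≤ K)
    (hY0 : 0 ≤ᵐ[μ] Y) (hY : ∀ᵐ ω ∂μ, Y ω ≤ K * ((1 + ‖Z ω‖) ^ p * max 1 (⨆ k, |g k ω|) ^ q)) :
    ∫ ω, Y ω ∂μ ≤
      K * (2 ^ p * (1 + ∫ ω, ‖Z ω‖ ^ p ∂μ)) * (1 + Fintype.card ι * ∫ x, |x| ^ q ∂ν) := by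
  have hindep : IndepFun (fun ω => (1 + ‖Z ω‖) ^ p) (fun ω => max 1 (⨆ k, |g k ω|) ^ q) μ :=
    hZg.comp (φ := fun x => (1 + ‖x‖) ^ p) (ψ := fun v : ι → ℝ => max 1 (⨆ k, |v k|) ^ q)
      (by fun_prop) ((measurable_const.max (Measurable.iSup fun k =>
        (measurable_pi_apply k).abs)).pow_const q)
  calc ∫ ω, Y ω ∂μ
      ≤ K * ((∫ ω, (1 + ‖Z ω‖) ^ p ∂μ) * ∫ ω, max 1 (⨆ k, |g k ω|) ^ q ∂μ) :=
        integral_le_mul_of_le_mul_indepFun hY0 hY hindep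
          (integrable_one_add_rpow hp (fun ω => norm_nonneg _) hZ.norm hZp)
          (integrable_max_one_iSup_rpow hg hq)
    _ ≤ K * ((2 ^ p * (1 + ∫ ω, ‖Z ω‖ ^ p ∂μ)) * (1 + Fintype.card ι * ∫ x, |x| ^ q ∂ν)) := by
        gcongr
        · exact integral_one_add_rpow_le hp (fun ω => norm_nonneg _) hZp
        · exact integral_max_one_iSup_rpow_le hg hq
    _ = _ := by ring

theorem stmt_9_general (s m : ℕ)
    (c c₃ : ℝ) (hc : 0 < c) (hc₃ : 0 < c₃)
    (p₁ p₂ p₃ : ℝ) (hp₁ : p₁ = 0 ∨ 1 ≤ p₁) (hp₂ : p₂ = 0 ∨ 1 ≤ p₂) (hp₃ : p₃ = 0 ∨ 1 ≤ p₃)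
    (h₀ : ℝ) (hh₀ : 0 < h₀) (hh₀' : h₀ < 1 / ((s : ℝ) * c * c₃)) :
    ∃ c₄ > (0 : ℝ),
      ∀ (d : ℕ) (Ω : Type) [MeasurableSpace Ω] (μ : Measure Ω) [IsProbabilityMeasure μ]
        (a : ℝ → EuclideanSpace ℝ (Fin d) → EuclideanSpace ℝ (Fin d)),
        (∀ t x, ‖a t x‖ ≤ c * (1 + ‖x‖)) →
        ∀ (b : Fin m → ℝ → EuclideanSpace ℝ (Fin d) → EuclideanSpace ℝ (Fin d)),
          (∀ k t x, ‖b k t x‖ ≤ c * (1 + ‖x‖)) →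
        ∀ (A0 A1 B1 : Fin s → Fin s → ℝ) (c0 c1 : Fin s → ℝ),
          (∀ i j, |A0 i j| ≤ c₃) → (∀ i j, |A1 i j| ≤ c₃) → (∀ i j, |B1 i j| ≤ c₃) →
          (∀ i j, i ≤ j → B1 i j = 0) →
          (∀ j, |c0 j| ≤ c₃) → (∀ j, |c1 j| ≤ c₃) →
        ∀ (h : ℝ), 0 < h → h < h₀ →
        ∀ (t : ℝ) (G : Fin m → Ω → ℝ) (Z : Ω → EuclideanSpace ℝ (Fin d)),
          (∀ k, Measurable (G k)) → Measurable Z →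
          iIndepFun G μ →
          (∀ k, Measure.map (G k) μ = gaussianReal 0 h.toNNReal) →
          IndepFun Z (fun ω (k : Fin m) => G k ω) μ →
          Integrable (fun ω => ‖Z ω‖ ^ p₃) μ →
        ∀ (ξ : Fin m → Fin m → Ω → ℝ),
          ((∀ r k ω, ξ r k ω = G r ω * G k ω / 2) ∨
            (∀ r k ω, ξ r k ω = G r ω * G k ω / 2 - if r = k then h / 2 else 0)) →
        ∀ (H0 : Fin s → Ω → EuclideanSpace ℝ (Fin d))
          (H : Fin m → Fin s → Ω → EuclideanSpace ℝ (Fin d)),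
          (∀ i, Measurable (H0 i)) →
          (∀ᵐ ω ∂μ, ∀ i, H0 i ω = Z ω + h • ∑ j, A0 i j • a (t + c0 j * h) (H0 j ω)) →
          (∀ k i ω, H k i ω = Z ω + h • (∑ j, A1 i j • a (t + c0 j * h) (H0 j ω))
            + ∑ r, ∑ j ∈ Finset.univ.filter (fun j => j < i),
                (B1 i j * ξ r k ω) • b r (t + c1 j * h) (H r j ω)) →
        ∀ (j₁ j₂ j₃ : Fin m),
          ∫ ω, |G j₁ ω| ^ p₁ * |ξ j₂ j₃ ω| ^ p₂ *
              (⨆ ki : Fin m × Fin s, ‖H ki.1 ki.2 ω - Z ω‖ ^ p₃) ∂μ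
            ≤ c₄ * (1 + ∫ ω, ‖Z ω‖ ^ p₃ ∂μ) * h ^ (p₁ / 2 + p₂ + p₃) := by
  have hp₁0 : 0 ≤ p₁ := by rcases hp₁ with hp | hp <;> linarith
  have hp₂0 : 0 ≤ p₂ := by rcases hp₂ with hp | hp <;> linarith
  have hp₃0 : 0 ≤ p₃ := by rcases hp₃ with hp | hp <;> linarith
  have hscc : 0 < (s : ℝ) * c * c₃ := one_div_pos.mp (hh₀.trans hh₀')
  have hh₀scc : h₀ * (s * c * c₃) < 1 := (lt_div_iff₀ hscc).mp hh₀'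
  set C := srkStageConst s m c c₃ h₀
  have hC : 0 < C := srkStageConst_pos hc.le hc₃.le hh₀.le hscc hh₀scc
  set Q := p₁ + 2 * p₂ + ((2 * s + 2 : ℕ) : ℝ) * p₃
  have hQ : Integrable (fun x => |x| ^ Q) (gaussianReal 0 1) :=
    integrable_abs_rpow_gaussianReal (by positivity)
  set κ := 1 + m * ∫ x, |x| ^ Q ∂gaussianReal 0 1
  refine ⟨C ^ p₃ * 2 ^ p₃ * κ, by positivity, ?_⟩
  intro d Ω _ μ _ a ha b hb A0 A1 B1 c0 c1 hA0 hA1 hB1 _ _ _ h hh hhh₀ t G Z hG hZ _ hGlaw hZG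
    hZint ξ hξ H0 H _ hH0 hH j₁ j₂ j₃
  have hpoint : ∀ᵐ ω ∂μ, |G j₁ ω| ^ p₁ * |ξ j₂ j₃ ω| ^ p₂ *
      (⨆ ki : Fin m × Fin s, ‖H ki.1 ki.2 ω - Z ω‖ ^ p₃) ≤ C ^ p₃ * h ^ (p₁ / 2 + p₂ + p₃) *
        ((1 + ‖Z ω‖) ^ p₃ * max 1 (⨆ k, |G k ω / √h|) ^ Q) := by
    filter_upwards [hH0] with ω hω
    simpa only [Fintype.card_fin] using srk_integrand_le hc.le hc₃.le hh hhh₀.le hh₀scc hp₁0 hp₂0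
      hp₃0 hA0 hA1 hB1 (hξ.imp (fun hξ r k => hξ r k ω) (fun hξ r k => hξ r k ω))
      (fun j => ha _ _) (fun r j => hb r _ _) hω (fun k i => hH k i ω) j₁ j₂ j₃
  have hbound := integral_le_of_le_mul_one_add_norm_rpow_mul_max_rpow hp₃0 hZ.aemeasurable hZint
    (fun k => hasLaw_div_sqrt_of_map_eq_gaussianReal hh (hG k) (hGlaw k)) hQ
    (hZG.comp (ψ := fun (v : Fin m → ℝ) k => v k / √h) measurable_id (by fun_prop)) (by positivity)
    (ae_of_all _ fun ω => mul_nonneg (by positivity) (Real.iSup_nonneg fun _ => by positivity))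
    hpoint
  rw [Fintype.card_fin] at hbound
  exact hbound.trans_eq (by ring)

/-- Lemma 6.4 (commutative-noise form with `ξ̂ = I^C` or `J^C`): mixed moment bound for
a Gaussian increment, a commutative-noise multiplier and the increments of the diffusion
stages of the SRK method, with a constant depending only on `p₁, p₂, p₃, s, c₃, c, m, h₀`. -/
theorem stmt_9 (s m : ℕ) (hs : 0 < s) (hm : 0 < m)
    (c c₃ : ℝ) (hc : 0 < c) (hc₃ : 0 < c₃)
    (p₁ p₂ p₃ : ℝ) (hp₁ : p₁ = 0 ∨ 1 ≤ p₁) (hp₂ : p₂ = 0 ∨ 1 ≤ p₂) (hp₃ : p₃ = 0 ∨ 1 ≤ p₃)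
    (h₀ : ℝ) (hh₀ : 0 < h₀) (hh₀' : h₀ < 1 / ((s : ℝ) * c * c₃)) :
    ∃ c₄ > (0 : ℝ),
      ∀ (d : ℕ) (Ω : Type) [MeasurableSpace Ω] (μ : Measure Ω) [IsProbabilityMeasure μ]
        (a : ℝ → EuclideanSpace ℝ (Fin d) → EuclideanSpace ℝ (Fin d)),
        (∀ t x, ‖a t x‖ ≤ c * (1 + ‖x‖)) →
        ∀ (b : Fin m → ℝ → EuclideanSpace ℝ (Fin d) → EuclideanSpace ℝ (Fin d)),
          (∀ k t x, ‖b k t x‖ ≤ c * (1 + ‖x‖)) →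
        ∀ (A0 A1 B1 : Fin s → Fin s → ℝ) (c0 c1 : Fin s → ℝ),
          (∀ i j, |A0 i j| ≤ c₃) → (∀ i j, |A1 i j| ≤ c₃) → (∀ i j, |B1 i j| ≤ c₃) →
          (∀ i j, i ≤ j → B1 i j = 0) →
          (∀ j, |c0 j| ≤ c₃) → (∀ j, |c1 j| ≤ c₃) →
        ∀ (h : ℝ), 0 < h → h < h₀ →
        ∀ (t : ℝ) (G : Fin m → Ω → ℝ) (Z : Ω → EuclideanSpace ℝ (Fin d)),
          (∀ k, Measurable (G k)) → Measurable Z →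
          iIndepFun G μ →
          (∀ k, Measure.map (G k) μ = gaussianReal 0 h.toNNReal) →
          IndepFun Z (fun ω (k : Fin m) => G k ω) μ →
          Integrable (fun ω => ‖Z ω‖ ^ p₃) μ →
        ∀ (ξ : Fin m → Fin m → Ω → ℝ),
          ((∀ r k ω, ξ r k ω = G r ω * G k ω / 2) ∨
            (∀ r k ω, ξ r k ω = G r ω * G k ω / 2 - if r = k then h / 2 else 0)) →
        ∀ (H0 : Fin s → Ω → EuclideanSpace ℝ (Fin d))
          (H : Fin m → Fin s → Ω → EuclideanSpace ℝ (Fin d)),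
          (∀ i, Measurable (H0 i)) →
          (∀ᵐ ω ∂μ, ∀ i, H0 i ω = Z ω + h • ∑ j, A0 i j • a (t + c0 j * h) (H0 j ω)) →
          (∀ k i ω, H k i ω = Z ω + h • (∑ j, A1 i j • a (t + c0 j * h) (H0 j ω))
            + ∑ r, ∑ j ∈ Finset.univ.filter (fun j => j < i),
                (B1 i j * ξ r k ω) • b r (t + c1 j * h) (H r j ω)) →
        ∀ (j₁ j₂ j₃ : Fin m),
          ∫ ω, |G j₁ ω| ^ p₁ * |ξ j₂ j₃ ω| ^ p₂ *
              (⨆ ki : Fin m × Fin s, ‖H ki.1 ki.2 ω - Z ω‖ ^ p₃) ∂μ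
            ≤ c₄ * (1 + ∫ ω, ‖Z ω‖ ^ p₃ ∂μ) * h ^ (p₁ / 2 + p₂ + p₃) :=
  stmt_9_general s m c c₃ hc hc₃ p₁ p₂ p₃ hp₁ hp₂ hp₃ h₀ hh₀ hh₀'
end

section
/- If 0 < h < 1/(s·c·c₃), then for every t ∈ ℝ, every Z ∈ ℝ^d and every family of drift stage values H⁽⁰⁾₁, …, H⁽⁰⁾_s with data (Z, t, h), one has max_{1≤i≤s} ‖H⁽⁰⁾_i − Z‖ ≤ s·c₃·c·(1 + ‖Z‖)·h / (1 − s·c₃·c·h). (Estimate (46) for the increments of the drift stages of the SRK method.) -/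
/-!
Let `M` be the largest increment `‖H⁽⁰⁾ⱼ - Z‖`. Then `‖H⁽⁰⁾ⱼ‖ ≤ ‖Z‖ + M`, so by the linear growth of
the drift every increment, and hence `M` itself, is at most `α (1 + ‖Z‖ + M)` with
`α = s c₃ c h`. Since `α < 1` this inequality can be solved for `M`.
-/

open Finset

lemma le_mul_div_one_sub_of_le_mul_add {α K M : ℝ} (hα : α < 1) (hM : M ≤ α * (K + M)) :
    M ≤ α * K / (1 - α) := by
  rw [le_div_iff₀ (sub_pos.mpr hα)]
  linarith

section

variable {ι E : Type*} [SeminormedAddCommGroup E]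

lemma norm_apply_le_of_norm_sub_le {c : ℝ} (hc : 0 ≤ c) {g : E → E}
    (hg : ∀ x, ‖g x‖ ≤ c * (1 + ‖x‖)) {x Z : E} {M : ℝ} (hx : ‖x - Z‖ ≤ M) :
    ‖g x‖ ≤ c * (1 + ‖Z‖ + M) :=
  calc ‖g x‖ ≤ c * (1 + ‖x‖) := hg x
    _ ≤ c * (1 + ‖Z‖ + M) :=
      mul_le_mul_of_nonneg_left (by linarith [norm_le_norm_add_norm_sub' x Z]) hc

variable [Fintype ι] [NormedSpace ℝ E]

lemma norm_stage_sub_le {c c₃ h M : ℝ} (hc : 0 ≤ c) {f : ι → E → E}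
    (hf : ∀ j x, ‖f j x‖ ≤ c * (1 + ‖x‖)) {A : ι → ι → ℝ} (hA : ∀ i j, |A i j| ≤ c₃)
    {Z : E} {H : ι → E} (hH : ∀ i, H i = Z + h • ∑ j, A i j • f j (H j))
    (hM : ∀ j, ‖H j - Z‖ ≤ M) (i : ι) :
    ‖H i - Z‖ ≤ Fintype.card ι * c₃ * c * |h| * (1 + ‖Z‖ + M) := by
  rw [hH i, add_sub_cancel_left, norm_smul, Real.norm_eq_abs]
  calc |h| * ‖∑ j, A i j • f j (H j)‖ ≤ |h| * ∑ _j : ι, c₃ * (c * (1 + ‖Z‖ + M)) := by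
        gcongr
        refine (norm_sum_le _ _).trans (sum_le_sum fun j _ => ?_)
        rw [norm_smul, Real.norm_eq_abs]
        exact mul_le_mul (hA i j) (norm_apply_le_of_norm_sub_le hc (hf j) (hM j))
          (norm_nonneg _) ((abs_nonneg _).trans (hA i j))
    _ = Fintype.card ι * c₃ * c * |h| * (1 + ‖Z‖ + M) := by
        rw [sum_const, card_univ, nsmul_eq_mul]
        ring

theorem norm_stage_sub_le_div {c c₃ h : ℝ} (hc : 0 ≤ c) {f : ι → E → E}
    (hf : ∀ j x, ‖f j x‖ ≤ c * (1 + ‖x‖)) {A : ι → ι → ℝ} (hA : ∀ i j, |A i j| ≤ c₃)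
    {Z : E} {H : ι → E} (hH : ∀ i, H i = Z + h • ∑ j, A i j • f j (H j))
    (hsmall : Fintype.card ι * c₃ * c * |h| < 1) (i : ι) :
    ‖H i - Z‖ ≤
      Fintype.card ι * c₃ * c * |h| * (1 + ‖Z‖) / (1 - Fintype.card ι * c₃ * c * |h|) := by
  have : Nonempty ι := ⟨i⟩
  obtain ⟨i₀, hi₀⟩ := Finite.exists_max fun j => ‖H j - Z‖
  exact (hi₀ i).trans
    (le_mul_div_one_sub_of_le_mul_add hsmall (norm_stage_sub_le hc hf hA hH hi₀ i₀))

end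

theorem stmt_14_general (s d : ℕ) (c c₃ : ℝ) (hc : 0 < c)
    (a : ℝ → EuclideanSpace ℝ (Fin d) → EuclideanSpace ℝ (Fin d))
    (ha : ∀ t x, ‖a t x‖ ≤ c * (1 + ‖x‖))
    (A0 : Fin s → Fin s → ℝ) (hA0 : ∀ i j, |A0 i j| ≤ c₃)
    (c0 : Fin s → ℝ)
    (h : ℝ) (hh : 0 < h) (hh' : h < 1 / ((s : ℝ) * c * c₃))
    (t : ℝ) (Z : EuclideanSpace ℝ (Fin d))
    (H0 : Fin s → EuclideanSpace ℝ (Fin d))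
    (hH0 : ∀ i, H0 i = Z + h • ∑ j, A0 i j • a (t + c0 j * h) (H0 j)) :
    ∀ i, ‖H0 i - Z‖ ≤ (s : ℝ) * c₃ * c * (1 + ‖Z‖) * h / (1 - (s : ℝ) * c₃ * c * h) := by
  intro i
  have hpos : 0 < (s : ℝ) * c * c₃ := one_div_pos.mp (hh.trans hh')
  have hsmall : (s : ℝ) * c₃ * c * h < 1 := by
    rw [lt_div_iff₀ hpos] at hh'
    linarith
  have hbound := norm_stage_sub_le_div hc.le (fun j => ha (t + c0 j * h)) hA0 hH0
    (by simpa [abs_of_pos hh] using hsmall) i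
  simp only [Fintype.card_fin, abs_of_pos hh] at hbound
  convert hbound using 2
  ring

/-- Estimate (46): bound on the increments of the drift stages of the SRK method. -/
theorem stmt_14 (s d : ℕ) (hs : 0 < s) (hd : 0 < d) (c c₃ : ℝ) (hc : 0 < c) (hc₃ : 0 < c₃)
    (a : ℝ → EuclideanSpace ℝ (Fin d) → EuclideanSpace ℝ (Fin d))
    (ha : ∀ t x, ‖a t x‖ ≤ c * (1 + ‖x‖))
    (A0 : Fin s → Fin s → ℝ) (hA0 : ∀ i j, |A0 i j| ≤ c₃)
    (c0 : Fin s → ℝ) (hc0 : ∀ j, |c0 j| ≤ c₃)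
    (h : ℝ) (hh : 0 < h) (hh' : h < 1 / ((s : ℝ) * c * c₃))
    (t : ℝ) (Z : EuclideanSpace ℝ (Fin d))
    (H0 : Fin s → EuclideanSpace ℝ (Fin d))
    (hH0 : ∀ i, H0 i = Z + h • ∑ j, A0 i j • a (t + c0 j * h) (H0 j)) :
    ∀ i, ‖H0 i - Z‖ ≤ (s : ℝ) * c₃ * c * (1 + ‖Z‖) * h / (1 - (s : ℝ) * c₃ * c * h) :=
  stmt_14_general s d c c₃ hc a ha A0 hA0 c0 h hh hh' t Z H0 hH0
end

section
/- If 0 < h < 1/(s·c·c₃), then for every t ∈ ℝ, every Z ∈ ℝ^d, all real numbers ξ_{r,k} (r, k = 1, …, m) with S := ∑_{r,k=1}^{m} |ξ_{r,k}|, every family of drift stage values H⁽⁰⁾₁, …, H⁽⁰⁾_s with data (Z, t, h) and the corresponding diffusion stage values H⁽ᵏ⁾_i, one has for every i = 1, …, s: max_{1≤k≤m} ‖H⁽ᵏ⁾_i − Z‖ ≤ s·c₃·c·(1 + ‖Z‖)·h/(1 − s·c₃·c·h) + s·c₃·c·S + ( (‖Z‖ + s·c₃·c·h)/(1 − s·c₃·c·h)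 + s·c₃·c·S ) · ∑_{j=1}^{i−1} (c₃·c·s)^j · S^j. (Estimate (49) for the increments of the diffusion stages of the SRK method.) -/
/-!
The drift stages solve a fixed-point system, so their largest norm `M` satisfies
`M ≤ ‖Z‖ + α (1 + M)` with `α = s c₃ c h < 1`, i.e. `M ≤ (‖Z‖ + α) / (1 - α)`. This bounds the drift
part of every diffusion stage by `W = α (1 + ‖Z‖) / (1 - α)`. A diffusion stage only involves
earlier diffusion stages, so by strong induction its increment is at most `T i`, where
`T 0 = W + β`, `T (i + 1) = W + β (1 + ‖Z‖ + T i)` and `β = s c₃ c ∑ |ξ|`; unrolling this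
recursion gives the geometric sum of the estimate.
-/

open Finset

section

variable {E : Type*} [NormedAddCommGroup E] [NormedSpace ℝ E]

def HasLinearGrowth (c : ℝ) (f : ℝ → E → E) : Prop :=
  ∀ t x, ‖f t x‖ ≤ c * (1 + ‖x‖)

theorem norm_sum_smul_le_card_mul {ι : Type*} (J : Finset ι) {w : ι → ℝ} {v : ι → E} {C K : ℝ}
    (hw : ∀ j ∈ J, |w j| ≤ C) (hv : ∀ j ∈ J, ‖v j‖ ≤ K) :
    ‖∑ j ∈ J, w j • v j‖ ≤ #J * (C * K) := by
  refine (norm_sum_le _ _).trans ?_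
  rw [← nsmul_eq_mul]
  refine sum_le_card_nsmul _ _ _ fun j hj => ?_
  rw [norm_smul, Real.norm_eq_abs]
  exact mul_le_mul (hw j hj) (hv j hj) (norm_nonneg _) ((abs_nonneg _).trans (hw j hj))

theorem le_div_one_sub_of_self_bound {ι : Type*} [Finite ι] {f : ι → ℝ} {z α : ℝ} (hα : α < 1)
    (hf : ∀ M, (∀ j, f j ≤ M) → ∀ i, f i ≤ z + α * M) (i : ι) : f i ≤ z / (1 - α) := by
  have : Nonempty ι := ⟨i⟩
  obtain ⟨i₀, hi₀⟩ := Finite.exists_max f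
  have hmax := hf (f i₀) hi₀ i₀
  refine (hi₀ i).trans ?_
  rw [le_div_iff₀ (by linarith)]
  linarith

theorem norm_smul_sum_smul_le {ι : Type*} [Fintype ι] {f : ℝ → E → E} {c c₃ h M : ℝ}
    (hf : HasLinearGrowth c f) (hc : 0 ≤ c) (hh : 0 ≤ h) {w : ι → ℝ} (hw : ∀ j, |w j| ≤ c₃)
    (τ : ι → ℝ) {x : ι → E} (hx : ∀ j, ‖x j‖ ≤ M) :
    ‖h • ∑ j, w j • f (τ j) (x j)‖ ≤ Fintype.card ι * c₃ * c * h * (1 + M) := by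
  have hsum := norm_sum_smul_le_card_mul univ (fun j _ => hw j)
    (fun j _ => (hf (τ j) (x j)).trans (mul_le_mul_of_nonneg_left (add_le_add_right (hx j) 1) hc))
  rw [card_univ] at hsum
  rw [norm_smul, Real.norm_eq_abs, abs_of_nonneg hh]
  calc h * ‖∑ j, w j • f (τ j) (x j)‖ ≤ h * (Fintype.card ι * (c₃ * (c * (1 + M)))) := by
        gcongr
    _ = Fintype.card ι * c₃ * c * h * (1 + M) := by ring

theorem norm_drift_stage_le {ι : Type*} [Fintype ι] {a : ℝ → E → E} {c c₃ h : ℝ}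
    (ha : HasLinearGrowth c a) (hc : 0 ≤ c) (hh : 0 ≤ h) {A : ι → ι → ℝ}
    (hA : ∀ i j, |A i j| ≤ c₃) (hα : Fintype.card ι * c₃ * c * h < 1) (τ : ι → ℝ) (Z : E)
    {H : ι → E} (hH : ∀ i, H i = Z + h • ∑ j, A i j • a (τ j) (H j)) (i : ι) :
    ‖H i‖ ≤ (‖Z‖ + Fintype.card ι * c₃ * c * h) / (1 - Fintype.card ι * c₃ * c * h) := by
  refine le_div_one_sub_of_self_bound (f := fun i => ‖H i‖) hα (fun M hM i => ?_) i
  calc ‖H i‖ ≤ ‖Z‖ + ‖h • ∑ j, A i j • a (τ j) (H j)‖ := by rw [hH i]; exact norm_add_le _ _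
    _ ≤ ‖Z‖ + Fintype.card ι * c₃ * c * h * (1 + M) := by
        gcongr; exact norm_smul_sum_smul_le ha hc hh (hA i) τ hM
    _ = _ := by ring

theorem norm_diffusion_sum_le {ι ρ : Type*} [Fintype ι] [Fintype ρ] {b : ρ → ℝ → E → E}
    {c c₃ R : ℝ} (hb : ∀ r, HasLinearGrowth c (b r)) (hc : 0 ≤ c) (hc₃ : 0 ≤ c₃) (hR : 0 ≤ R)
    (J : Finset ι) {w : ι → ℝ} (hw : ∀ j, |w j| ≤ c₃) (ξ : ρ → ℝ) (τ : ι → ℝ) {x : ρ → ι → E}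
    (hx : ∀ r, ∀ j ∈ J, ‖x r j‖ ≤ R) :
    ‖∑ r, ∑ j ∈ J, (w j * ξ r) • b r (τ j) (x r j)‖
      ≤ Fintype.card ι * c₃ * c * (1 + R) * ∑ r, |ξ r| := by
  have hterm : ∀ r, ‖∑ j ∈ J, (w j * ξ r) • b r (τ j) (x r j)‖
      ≤ Fintype.card ι * c₃ * c * (1 + R) * |ξ r| := fun r => by
    have hJ : (#J : ℝ) ≤ Fintype.card ι := by exact_mod_cast card_le_univ J
    calc _ ≤ #J * ((c₃ * |ξ r|) * (c * (1 + R))) :=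
          norm_sum_smul_le_card_mul J
            (fun j _ => by rw [abs_mul]; exact mul_le_mul_of_nonneg_right (hw j) (abs_nonneg _))
            (fun j hj => (hb r _ _).trans
              (mul_le_mul_of_nonneg_left (add_le_add_right (hx r j hj) 1) hc))
      _ ≤ Fintype.card ι * ((c₃ * |ξ r|) * (c * (1 + R))) := by gcongr
      _ = _ := by ring
  rw [mul_sum]
  exact (norm_sum_le _ _).trans (sum_le_sum fun r _ => hterm r)

end

def srkStageBound (z W β : ℝ) (n : ℕ) : ℝ :=
  W + β + (z + W + β) * ∑ j ∈ Icc 1 n, β ^ j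

@[simp]
theorem srkStageBound_zero (z W β : ℝ) : srkStageBound z W β 0 = W + β := by
  simp [srkStageBound]

theorem srkStageBound_succ (z W β : ℝ) (n : ℕ) :
    srkStageBound z W β (n + 1) = W + β * (1 + z + srkStageBound z W β n) := by
  have hIcc (k : ℕ) : ∑ j ∈ Icc 1 k, β ^ j = β * ∑ j ∈ range k, β ^ j := by
    rw [← Ico_add_one_right_eq_Icc, sum_Ico_eq_sum_range, mul_sum]
    simp only [Nat.add_sub_cancel, pow_add, pow_one]
  simp only [srkStageBound, hIcc, geom_sum_succ]
  ring

theorem srkStageBound_mono {z W β : ℝ} (hβ : 0 ≤ β) (hzWβ : 0 ≤ z + W + β) :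
    Monotone (srkStageBound z W β) := fun p q hpq => by
  unfold srkStageBound
  gcongr

theorem norm_diffusion_stage_sub_le_s17 {E : Type*} [NormedAddCommGroup E] [NormedSpace ℝ E]
    {s : ℕ} {ρ : Type*} [Fintype ρ] {b : ρ → ℝ → E → E} {c c₃ W S : ℝ}
    (hb : ∀ r, HasLinearGrowth c (b r)) (hc : 0 ≤ c) (hc₃ : 0 ≤ c₃) {B : Fin s → Fin s → ℝ}
    (hB : ∀ i j, |B i j| ≤ c₃) {ξ : ρ → ρ → ℝ} (hS : ∀ k, ∑ r, |ξ r k| ≤ S) (τ : Fin s → ℝ)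
    (Z : E) {D : Fin s → E} (hD : ∀ i, ‖D i‖ ≤ W) {H : ρ → Fin s → E}
    (hH : ∀ k i, H k i = Z + D i
      + ∑ r, ∑ j ∈ univ.filter (fun j => j < i), (B i j * ξ r k) • b r (τ j) (H r j))
    (i : Fin s) (k : ρ) :
    ‖H k i - Z‖ ≤ srkStageBound ‖Z‖ W (s * c₃ * c * S) i := by
  set β := (s : ℝ) * c₃ * c * S
  set T := srkStageBound ‖Z‖ W β
  have hS₀ : 0 ≤ S := (sum_nonneg fun r _ => abs_nonneg _).trans (hS k)
  have hβ : 0 ≤ β := by positivity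
  have hW : 0 ≤ W := (norm_nonneg _).trans (hD i)
  have hmono : Monotone T := srkStageBound_mono hβ (by positivity)
  have hT (n : ℕ) : 0 ≤ T n := by simp only [T, srkStageBound]; positivity
  induction i using WellFoundedLT.induction generalizing k with
  | _ i ih =>
  have hsplit : ‖H k i - Z‖ ≤ ‖D i‖
      + ‖∑ r, ∑ j ∈ univ.filter (fun j => j < i), (B i j * ξ r k) • b r (τ j) (H r j)‖ := by
    rw [hH k i, add_assoc, add_sub_cancel_left]
    exact norm_add_le _ _
  cases hi : (i : ℕ) with
  | zero =>
    have hempty : univ.filter (fun j => j < i) = ∅ := by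
      ext j
      simp [Fin.lt_def, hi]
    simp only [hempty, sum_empty, sum_const_zero, norm_zero, add_zero] at hsplit
    simp only [T, srkStageBound_zero]
    linarith [hD i]
  | succ p =>
    have hprev : ∀ r, ∀ j ∈ univ.filter (fun j => j < i), ‖H r j‖ ≤ ‖Z‖ + T p := by
      intro r j hj
      have hjp : (j : ℕ) ≤ p := by have := Fin.lt_def.mp (mem_filter.mp hj).2; omega
      linarith [(ih j (mem_filter.mp hj).2 r).trans (hmono hjp), norm_le_insert' (H r j) Z]
    have hdiff := norm_diffusion_sum_le hb hc hc₃ (add_nonneg (norm_nonneg _) (hT p)) _ (hB i)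
      (fun r => ξ r k) τ hprev
    rw [Fintype.card_fin] at hdiff
    have hpos : 0 ≤ 1 + (‖Z‖ + T p) := by linarith [hT p, norm_nonneg Z]
    calc ‖H k i - Z‖ ≤ W + s * c₃ * c * (1 + (‖Z‖ + T p)) * ∑ r, |ξ r k| := by linarith [hD i]
      _ ≤ W + s * c₃ * c * (1 + (‖Z‖ + T p)) * S := by gcongr; exact hS k
      _ = T (p + 1) := by simp only [T, srkStageBound_succ]; ring

theorem stmt_17_general (s d m : ℕ)
    (c c₃ : ℝ) (hc : 0 < c) (hc₃ : 0 < c₃)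
    (a : ℝ → EuclideanSpace ℝ (Fin d) → EuclideanSpace ℝ (Fin d))
    (ha : ∀ t x, ‖a t x‖ ≤ c * (1 + ‖x‖))
    (b : Fin m → ℝ → EuclideanSpace ℝ (Fin d) → EuclideanSpace ℝ (Fin d))
    (hb : ∀ k t x, ‖b k t x‖ ≤ c * (1 + ‖x‖))
    (A0 A1 B1 : Fin s → Fin s → ℝ)
    (hA0 : ∀ i j, |A0 i j| ≤ c₃) (hA1 : ∀ i j, |A1 i j| ≤ c₃) (hB1 : ∀ i j, |B1 i j| ≤ c₃)
    (c0 c1 : Fin s → ℝ)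
    (h : ℝ) (hh : 0 < h) (hh' : h < 1 / ((s : ℝ) * c * c₃))
    (t : ℝ) (Z : EuclideanSpace ℝ (Fin d))
    (ξ : Fin m → Fin m → ℝ)
    (H0 : Fin s → EuclideanSpace ℝ (Fin d))
    (hH0 : ∀ i, H0 i = Z + h • ∑ j, A0 i j • a (t + c0 j * h) (H0 j))
    (H : Fin m → Fin s → EuclideanSpace ℝ (Fin d))
    (hH : ∀ k i, H k i = Z + h • (∑ j, A1 i j • a (t + c0 j * h) (H0 j))
      + ∑ r, ∑ j ∈ Finset.univ.filter (fun j => j < i),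
          (B1 i j * ξ r k) • b r (t + c1 j * h) (H r j)) :
    ∀ i k, ‖H k i - Z‖ ≤
      (s : ℝ) * c₃ * c * (1 + ‖Z‖) * h / (1 - (s : ℝ) * c₃ * c * h)
        + (s : ℝ) * c₃ * c * (∑ r, ∑ l, |ξ r l|)
        + ((‖Z‖ + (s : ℝ) * c₃ * c * h) / (1 - (s : ℝ) * c₃ * c * h)
            + (s : ℝ) * c₃ * c * ∑ r, ∑ l, |ξ r l|)
          * ∑ j ∈ Finset.Icc 1 (i : ℕ),
              (c₃ * c * (s : ℝ)) ^ j * (∑ r, ∑ l, |ξ r l|) ^ j := by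
  set α := (s : ℝ) * c₃ * c * h
  have hα : α < 1 := by
    rcases (show 0 ≤ (s : ℝ) * c * c₃ by positivity).eq_or_lt with hzero | hpos
    · rw [← hzero, div_zero] at hh'
      linarith
    · rw [lt_div_iff₀ hpos] at hh'
      linarith
  have hdrift (j : Fin s) : ‖H0 j‖ ≤ (‖Z‖ + α) / (1 - α) := by
    simpa using norm_drift_stage_le ha hc.le hh.le hA0 (by simpa using hα) _ Z hH0 j
  have hW (i : Fin s) :
      ‖h • ∑ j, A1 i j • a (t + c0 j * h) (H0 j)‖ ≤ α * (1 + (‖Z‖ + α) / (1 - α)) := by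
    simpa using norm_smul_sum_smul_le ha hc.le hh.le (hA1 i) (fun j => t + c0 j * h) hdrift
  have hS (k : Fin m) : ∑ r, |ξ r k| ≤ ∑ r, ∑ l, |ξ r l| :=
    sum_le_sum fun r _ => single_le_sum (fun l _ => abs_nonneg (ξ r l)) (mem_univ k)
  intro i k
  refine (norm_diffusion_stage_sub_le_s17 hb hc.le hc₃.le hB1 hS _ Z hW hH i k).trans_eq ?_
  have hpow (j : ℕ) : ((s : ℝ) * c₃ * c * ∑ r, ∑ l, |ξ r l|) ^ j
      = (c₃ * c * s) ^ j * (∑ r, ∑ l, |ξ r l|) ^ j := by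
    rw [← mul_pow]; ring_nf
  have h1α : 1 - α ≠ 0 := by linarith
  simp only [srkStageBound, hpow]
  field_simp
  ring

/-- Estimate (49): bound on the increments of the diffusion stages of the SRK method. -/
theorem stmt_17 (s d m : ℕ) (hs : 0 < s) (hd : 0 < d) (hm : 0 < m)
    (c c₃ : ℝ) (hc : 0 < c) (hc₃ : 0 < c₃)
    (a : ℝ → EuclideanSpace ℝ (Fin d) → EuclideanSpace ℝ (Fin d))
    (ha : ∀ t x, ‖a t x‖ ≤ c * (1 + ‖x‖))
    (b : Fin m → ℝ → EuclideanSpace ℝ (Fin d) → EuclideanSpace ℝ (Fin d))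
    (hb : ∀ k t x, ‖b k t x‖ ≤ c * (1 + ‖x‖))
    (A0 A1 B1 : Fin s → Fin s → ℝ)
    (hA0 : ∀ i j, |A0 i j| ≤ c₃) (hA1 : ∀ i j, |A1 i j| ≤ c₃) (hB1 : ∀ i j, |B1 i j| ≤ c₃)
    (hB1tri : ∀ i j, i ≤ j → B1 i j = 0)
    (c0 c1 : Fin s → ℝ) (hc0 : ∀ j, |c0 j| ≤ c₃) (hc1 : ∀ j, |c1 j| ≤ c₃)
    (h : ℝ) (hh : 0 < h) (hh' : h < 1 / ((s : ℝ) * c * c₃))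
    (t : ℝ) (Z : EuclideanSpace ℝ (Fin d))
    (ξ : Fin m → Fin m → ℝ)
    (H0 : Fin s → EuclideanSpace ℝ (Fin d))
    (hH0 : ∀ i, H0 i = Z + h • ∑ j, A0 i j • a (t + c0 j * h) (H0 j))
    (H : Fin m → Fin s → EuclideanSpace ℝ (Fin d))
    (hH : ∀ k i, H k i = Z + h • (∑ j, A1 i j • a (t + c0 j * h) (H0 j))
      + ∑ r, ∑ j ∈ Finset.univ.filter (fun j => j < i),
          (B1 i j * ξ r k) • b r (t + c1 j * h) (H r j)) :
    ∀ i k, ‖H k i - Z‖ ≤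
      (s : ℝ) * c₃ * c * (1 + ‖Z‖) * h / (1 - (s : ℝ) * c₃ * c * h)
        + (s : ℝ) * c₃ * c * (∑ r, ∑ l, |ξ r l|)
        + ((‖Z‖ + (s : ℝ) * c₃ * c * h) / (1 - (s : ℝ) * c₃ * c * h)
            + (s : ℝ) * c₃ * c * ∑ r, ∑ l, |ξ r l|)
          * ∑ j ∈ Finset.Icc 1 (i : ℕ),
              (c₃ * c * (s : ℝ)) ^ j * (∑ r, ∑ l, |ξ r l|) ^ j :=
  stmt_17_general s d m c c₃ hc hc₃ a ha b hb A0 A1 B1 hA0 hA1 hB1 c0 c1 h hh hh' t Z ξ H0 hH0 H hH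
end
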